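/- arXiv:2210.16402 — 3 statements merged into one kernel-verified Lean document; each statement's English description precedes it below -/
import Mathlib

section
/- Let C : ℝ^d → ℝ^d be defined coordinatewise by C(x)_j = x_j / p_j with probability p_j and 0 with probability 1 − p_j, independently across coordinates, where p_j ∈ (0,1]. Then E[C(x)] = x and E[‖(I+Ω)^{-1} C(x)‖²] ≤ x^T (I+Ω)^{-1} x for the diagonal matrix Ω = Diag(1/p_j − 1). -/
open MeasureTheory Matrix ProbabilityTheory
open scoped Classical

/-! Since `I + Ω = diag(1 / p_j)`, its inverse is `diag(p_j)`, and `diag(p) C(x)` is just `x` with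
the coordinates outside the sampled set zeroed out. Both claims then reduce to the one-coordinate
fact `E[1_{S_j}] = p_j`, and the variance bound even holds with equality, coordinate by
coordinate. -/

theorem Matrix.inv_one_add_diagonal_one_div_sub_one {ι K : Type*} [Fintype ι] [DecidableEq ι]
    [Field K] {p : ι → K} (hp : ∀ j, p j ≠ 0) :
    (1 + diagonal (fun j => 1 / p j - 1))⁻¹ = diagonal p := by
  have hdiag : (1 : Matrix ι ι K) + diagonal (fun j => 1 / p j - 1) = diagonal (fun j => 1 / p j) := by
    rw [← diagonal_one, diagonal_add]
    simp only [add_sub_cancel]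
  rw [hdiag]
  refine inv_eq_right_inv ?_
  rw [diagonal_mul_diagonal, ← diagonal_one]
  exact congrArg diagonal (funext fun j => one_div_mul_cancel (hp j))

theorem MeasureTheory.integral_indicator_const_of_measure_eq_ofReal {Ω : Type*}
    [MeasurableSpace Ω] {μ : Measure Ω} {s : Set Ω} (hs : MeasurableSet s) {q : ℝ} (hq : 0 ≤ q)
    (hμs : μ s = ENNReal.ofReal q) (c : ℝ) :
    ∫ ω, s.indicator (fun _ => c) ω ∂μ = q * c := by
  rw [integral_indicator_const c hs, measureReal_def, hμs, ENNReal.toReal_ofReal hq, smul_eq_mul]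

theorem stmt6_general {d : ℕ} (p : Fin d → ℝ) (hp : ∀ j, 0 < p j)
    {Ωs : Type*} [MeasurableSpace Ωs] (μ : Measure Ωs) [IsProbabilityMeasure μ]
    (S : Fin d → Set Ωs) (hS : ∀ j, MeasurableSet (S j))
    (hpS : ∀ j, μ (S j) = ENNReal.ofReal (p j))
    (C : Ωs → (Fin d → ℝ) → (Fin d → ℝ))
    (hC : ∀ ω x j, C ω x j = if ω ∈ S j then x j / p j else 0) :
    ∀ x : Fin d → ℝ, (∀ j, ∫ ω, C ω x j ∂μ = x j) ∧
      ∫ ω, ∑ j, ((1 + Matrix.diagonal (fun j => 1 / p j - 1))⁻¹.mulVec (C ω x) j) ^ 2 ∂μ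
        ≤ x ⬝ᵥ (1 + Matrix.diagonal (fun j => 1 / p j - 1))⁻¹.mulVec x := by
  intro x
  have hE (j : Fin d) (c : ℝ) : ∫ ω, (S j).indicator (fun _ => c) ω ∂μ = p j * c :=
    integral_indicator_const_of_measure_eq_ofReal (hS j) (hp j).le (hpS j) c
  have hcoord (ω : Ωs) (j : Fin d) : C ω x j = (S j).indicator (fun _ => x j / p j) ω := by
    rw [hC, Set.indicator_apply]
  have hscaled (ω : Ωs) (j : Fin d) :
      (p j * C ω x j) ^ 2 = (S j).indicator (fun _ => x j ^ 2) ω := by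
    by_cases h : ω ∈ S j <;> simp [hC, h, mul_div_cancel₀ _ (hp j).ne']
  rw [inv_one_add_diagonal_one_div_sub_one fun j => (hp j).ne']
  refine ⟨fun j => by rw [funext (hcoord · j), hE, mul_div_cancel₀ _ (hp j).ne'], le_of_eq ?_⟩
  simp only [mulVec_diagonal, hscaled, dotProduct]
  rw [integral_finsetSum _ fun j _ => (integrable_const _).indicator (hS j)]
  exact Finset.sum_congr rfl fun j _ => by rw [hE]; ring

theorem stmt6 {d : ℕ} (p : Fin d → ℝ) (hp : ∀ j, 0 < p j) (hp1 : ∀ j, p j ≤ 1)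
    {Ωs : Type*} [MeasurableSpace Ωs] (μ : Measure Ωs) [IsProbabilityMeasure μ]
    (S : Fin d → Set Ωs) (hS : ∀ j, MeasurableSet (S j))
    (hpS : ∀ j, μ (S j) = ENNReal.ofReal (p j))
    (hindep : iIndepSet S μ)
    (C : Ωs → (Fin d → ℝ) → (Fin d → ℝ))
    (hC : ∀ ω x j, C ω x j = if ω ∈ S j then x j / p j else 0) :
    ∀ x : Fin d → ℝ, (∀ j, ∫ ω, C ω x j ∂μ = x j) ∧
      ∫ ω, ∑ j, ((1 + Matrix.diagonal (fun j => 1 / p j - 1))⁻¹.mulVec (C ω x) j) ^ 2 ∂μ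
        ≤ x ⬝ᵥ (1 + Matrix.diagonal (fun j => 1 / p j - 1))⁻¹.mulVec x :=
  stmt6_general p hp μ S hS hpS C hC
end

section
/- Let f : ℝ^d → ℝ be μ-strongly convex and L-smooth with 0 < μ ≤ L, and let x_⋆ be its minimizer. For any step-size γ with 0 < γ ≤ c/L for some c ∈ (0,1], and any x, ‖x − γ∇f(x) − x_⋆‖² + (1/c − 1)γ²‖∇f(x) − ∇f(x_⋆)‖² ≤ (1 − γμ)‖x − x_⋆‖². -/
open scoped RealInnerProductSpace

private lemma aux_div (L S D : ℝ) (hL : 0 < L) (h : D + S / L ≤ S / (2 * L)) :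
    S ≤ -(2 * L * D) := by
  have h2 : (D + S / L) * (2 * L) ≤ (S / (2 * L)) * (2 * L) :=
    mul_le_mul_of_nonneg_right h (by positivity)
  have e1 : (S / L) * (2 * L) = 2 * S := by field_simp
  have e2 : (S / (2 * L)) * (2 * L) = S := by field_simp
  nlinarith

theorem stmt9 {d : ℕ} (f : EuclideanSpace ℝ (Fin d) → ℝ) (hf : Differentiable ℝ f)
    (μ L : ℝ) (hμ : 0 < μ) (hμL : μ ≤ L)
    (hsc : ∀ x y : EuclideanSpace ℝ (Fin d),
      μ / 2 * ‖x - y‖ ^ 2 ≤ f x - f y - ⟪gradient f y, x - y⟫)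
    (hsm : ∀ x y : EuclideanSpace ℝ (Fin d),
      f x - f y - ⟪gradient f y, x - y⟫ ≤ L / 2 * ‖x - y‖ ^ 2)
    (xstar : EuclideanSpace ℝ (Fin d)) (hmin : ∀ z, f xstar ≤ f z)
    (c γ : ℝ) (hc : 0 < c) (hc1 : c ≤ 1) (hγ : 0 < γ) (hγL : γ ≤ c / L) :
    ∀ x, ‖x - γ • gradient f x - xstar‖ ^ 2
        + (1 / c - 1) * γ ^ 2 * ‖gradient f x - gradient f xstar‖ ^ 2
      ≤ (1 - γ * μ) * ‖x - xstar‖ ^ 2 := by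
  have hL : 0 < L := lt_of_lt_of_le hμ hμL
  -- general descent-type bound at any point y
  have hdesc : ∀ y : EuclideanSpace ℝ (Fin d),
      ‖gradient f y‖ ^ 2 ≤ 2 * L * (f y - f xstar) := by
    intro y
    set g := gradient f y with hg
    have hm := hsm (y - (1/L) • g) y
    have hmin' := hmin (y - (1/L) • g)
    have hsub : y - (1/L) • g - y = -((1/L) • g) := by abel
    rw [hsub] at hm
    have hip : ⟪g, -((1/L) • g)⟫ = -(1/L * ‖g‖^2) := by
      rw [inner_neg_right, real_inner_smul_right, real_inner_self_eq_norm_sq]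
    have hnrm : ‖-((1/L) • g)‖^2 = (1/L)^2 * ‖g‖^2 := by
      rw [norm_neg, norm_smul, mul_pow, Real.norm_eq_abs, sq_abs]
    rw [hip, hnrm] at hm
    have e : L/2 * ((1/L)^2 * ‖g‖^2) = ‖g‖^2 / (2*L) := by field_simp
    have e2 : (1:ℝ)/L * ‖g‖^2 = ‖g‖^2 / L := by ring
    have h' : (f xstar - f y) + ‖g‖^2 / L ≤ ‖g‖^2 / (2*L) := by
      rw [e] at hm; linarith
    have := aux_div L (‖g‖^2) (f xstar - f y) hL h'
    linarith
  -- gradient at the minimizer vanishes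
  have hgs0 : gradient f xstar = 0 := by
    have h := hdesc xstar
    have : ‖gradient f xstar‖^2 ≤ 0 := by linarith
    have hn : ‖gradient f xstar‖ = 0 := by nlinarith [norm_nonneg (gradient f xstar)]
    exact norm_eq_zero.mp hn
  intro x
  set g := gradient f x with hg
  set a := x - xstar with ha
  -- strong convexity at x
  have h1 := hsc xstar x
  have h1' : f x - f xstar + μ/2 * ‖a‖^2 ≤ ⟪g, a⟫ := by
    have hs : xstar - x = -a := by rw [ha]; abel
    rw [hs] at h1
    have hn : ⟪g, -a⟫ = -⟪g, a⟫ := inner_neg_right g a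
    rw [hn, norm_neg] at h1
    linarith
  have h2 : ‖g‖^2 ≤ 2 * L * (f x - f xstar) := hdesc x
  have hD : 0 ≤ f x - f xstar := by linarith [hmin x]
  -- expand the squared norm
  have hexp : ‖x - γ • g - xstar‖^2 = ‖a‖^2 - 2 * γ * ⟪g, a⟫ + γ^2 * ‖g‖^2 := by
    have hs : x - γ • g - xstar = a - γ • g := by rw [ha]; abel
    rw [hs, norm_sub_sq_real, real_inner_smul_right, norm_smul, mul_pow,
      Real.norm_eq_abs, sq_abs, real_inner_comm a g]
    ring
  rw [hgs0, sub_zero, hexp]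
  -- arithmetic
  have hγL' : γ * L ≤ c := (le_div_iff₀ hL).mp hγL
  have key : γ^2 * ‖g‖^2 / c ≤ 2 * γ * (f x - f xstar) := by
    have h3 : γ^2 * ‖g‖^2 ≤ γ^2 * (2 * L * (f x - f xstar)) :=
      mul_le_mul_of_nonneg_left h2 (sq_nonneg γ)
    have h4 : γ^2 * (2 * L * (f x - f xstar)) ≤ 2 * γ * (f x - f xstar) * c := by
      nlinarith [mul_nonneg hγ.le hD]
    rw [div_le_iff₀ hc]
    linarith
  have h5 : 2 * γ * (f x - f xstar + μ/2 * ‖a‖^2) ≤ 2 * γ * ⟪g, a⟫ :=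
    mul_le_mul_of_nonneg_left h1' (by linarith)
  have hkey' : (1/c) * γ^2 * ‖g‖^2 ≤ 2 * γ * (f x - f xstar) := by
    have : (1/c) * γ^2 * ‖g‖^2 = γ^2 * ‖g‖^2 / c := by ring
    rw [this]; exact key
  nlinarith [hkey', h5]
end

section
/- Let f be μ-strongly convex and L_i-smooth for each client i, with minimizer x_⋆ and h_{i,⋆} = ∇f_i(x_⋆). Suppose 0 < γ ≤ (1/L_i)·p²/(1 − q_i(1 − p²)) with p, q_i ∈ (0,1]. Then for any x_i: ‖x_i − x_⋆ − γ(∇f_i(x_i) − h_{i,⋆})‖² + (1 − q_i)(1 − p²)(γ²/p²)‖∇f_i(x_i) − h_{i,⋆}‖² ≤ (1 − γμ)‖x_i − x_⋆‖². -/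
open scoped RealInnerProductSpace

private lemma half_coco {d : ℕ} (f : EuclideanSpace ℝ (Fin d) → ℝ)
    (μ Li : ℝ) (hμ : 0 < μ) (hLi : 0 < Li)
    (hsc : ∀ x y : EuclideanSpace ℝ (Fin d),
      μ / 2 * ‖x - y‖ ^ 2 ≤ f x - f y - ⟪gradient f y, x - y⟫)
    (hsm : ∀ x y : EuclideanSpace ℝ (Fin d),
      f x - f y - ⟪gradient f y, x - y⟫ ≤ Li / 2 * ‖x - y‖ ^ 2)
    (x y : EuclideanSpace ℝ (Fin d)) :
    f y + ⟪gradient f y, x - y⟫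
      + (1 / (2 * Li)) * ‖gradient f x - gradient f y‖ ^ 2 ≤ f x := by
  set g : EuclideanSpace ℝ (Fin d) := gradient f x - gradient f y with hg
  set w : EuclideanSpace ℝ (Fin d) := x - Li⁻¹ • g with hwdef
  have h1 := hsm w x
  have h2 := hsc w y
  have hwx : w - x = -(Li⁻¹ • g) := by rw [hwdef]; abel
  have hwy : w - y = (x - y) - Li⁻¹ • g := by rw [hwdef]; abel
  have e1 : ‖w - x‖ ^ 2 = Li⁻¹ ^ 2 * ‖g‖ ^ 2 := by
    rw [hwx, norm_neg, norm_smul, Real.norm_eq_abs, abs_of_pos (by positivity),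
      mul_pow]
  have e2 : ⟪gradient f x, w - x⟫ = -(Li⁻¹ * ⟪gradient f x, g⟫) := by
    rw [hwx, inner_neg_right, real_inner_smul_right]
  have e3 : ⟪gradient f y, w - y⟫
      = ⟪gradient f y, x - y⟫ - Li⁻¹ * ⟪gradient f y, g⟫ := by
    rw [hwy, inner_sub_right, real_inner_smul_right]
  have e4 : ⟪gradient f x, g⟫ - ⟪gradient f y, g⟫ = ‖g‖ ^ 2 := by
    rw [← inner_sub_left, ← hg, real_inner_self_eq_norm_sq]
  have hnn : (0:ℝ) ≤ μ / 2 * ‖w - y‖ ^ 2 := by positivity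
  rw [e1, e2] at h1
  rw [e3] at h2
  have e5 : Li⁻¹ * ⟪gradient f x, g⟫ - Li⁻¹ * ⟪gradient f y, g⟫
      = Li⁻¹ * ‖g‖ ^ 2 := by rw [← mul_sub, e4]
  have e6 : Li / 2 * (Li⁻¹ ^ 2 * ‖g‖ ^ 2) = 1 / (2 * Li) * ‖g‖ ^ 2 := by
    field_simp
  have e7 : Li⁻¹ * ‖g‖ ^ 2 = 2 * (1 / (2 * Li) * ‖g‖ ^ 2) := by
    field_simp
  linarith

private lemma coco {d : ℕ} (f : EuclideanSpace ℝ (Fin d) → ℝ)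
    (μ Li : ℝ) (hμ : 0 < μ) (hLi : 0 < Li)
    (hsc : ∀ x y : EuclideanSpace ℝ (Fin d),
      μ / 2 * ‖x - y‖ ^ 2 ≤ f x - f y - ⟪gradient f y, x - y⟫)
    (hsm : ∀ x y : EuclideanSpace ℝ (Fin d),
      f x - f y - ⟪gradient f y, x - y⟫ ≤ Li / 2 * ‖x - y‖ ^ 2)
    (x y : EuclideanSpace ℝ (Fin d)) :
    μ * ‖x - y‖ ^ 2 + (1 / Li) * ‖gradient f x - gradient f y‖ ^ 2
      ≤ 2 * ⟪gradient f x - gradient f y, x - y⟫ := by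
  have h1 := half_coco f μ Li hμ hLi hsc hsm x y
  have h2 := half_coco f μ Li hμ hLi hsc hsm y x
  have hs1 := hsc x y
  have hs2 := hsc y x
  have e1 : ‖gradient f y - gradient f x‖ = ‖gradient f x - gradient f y‖ :=
    norm_sub_rev _ _
  have e2 : ‖y - x‖ = ‖x - y‖ := norm_sub_rev _ _
  have e3 : ⟪gradient f x - gradient f y, x - y⟫
      = ⟪gradient f x, x - y⟫ - ⟪gradient f y, x - y⟫ := inner_sub_left _ _ _
  have e4 : ⟪gradient f x, y - x⟫ = -⟪gradient f x, x - y⟫ := by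
    rw [← inner_neg_right]; congr 1; abel
  have e5 : ⟪gradient f y, y - x⟫ = -⟪gradient f y, x - y⟫ := by
    rw [← inner_neg_right]; congr 1; abel
  rw [e1, e4] at h2
  rw [e2, e4] at hs2
  have e6 : 1 / Li * ‖gradient f x - gradient f y‖ ^ 2
      = 2 * (1 / (2 * Li) * ‖gradient f x - gradient f y‖ ^ 2) := by
    field_simp
  linarith

set_option maxHeartbeats 1000000

theorem stmt10 {d n : ℕ} (fs : Fin n → EuclideanSpace ℝ (Fin d) → ℝ)
    (hdiff : ∀ i, Differentiable ℝ (fs i))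
    (μ : ℝ) (L : Fin n → ℝ) (hμ : 0 < μ) (hL : ∀ i, 0 < L i)
    (hsc : ∀ i, ∀ x y : EuclideanSpace ℝ (Fin d),
      μ / 2 * ‖x - y‖ ^ 2 ≤ fs i x - fs i y - ⟪gradient (fs i) y, x - y⟫)
    (hsm : ∀ i, ∀ x y : EuclideanSpace ℝ (Fin d),
      fs i x - fs i y - ⟪gradient (fs i) y, x - y⟫ ≤ L i / 2 * ‖x - y‖ ^ 2)
    (xstar : EuclideanSpace ℝ (Fin d))
    (hmin : ∀ z, (1 / n : ℝ) * ∑ i, fs i xstar ≤ (1 / n : ℝ) * ∑ i, fs i z)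
    (p : ℝ) (q : Fin n → ℝ) (hp : 0 < p) (hp1 : p ≤ 1)
    (hq : ∀ i, 0 < q i) (hq1 : ∀ i, q i ≤ 1)
    (γ : ℝ) (hγ : 0 < γ)
    (hγle : ∀ i, γ ≤ (1 / L i) * (p ^ 2 / (1 - q i * (1 - p ^ 2)))) :
    ∀ i, ∀ x : EuclideanSpace ℝ (Fin d),
      ‖x - xstar - γ • (gradient (fs i) x - gradient (fs i) xstar)‖ ^ 2
        + (1 - q i) * (1 - p ^ 2) * (γ ^ 2 / p ^ 2)
            * ‖gradient (fs i) x - gradient (fs i) xstar‖ ^ 2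
      ≤ (1 - γ * μ) * ‖x - xstar‖ ^ 2 := by
  intro i x
  set g : EuclideanSpace ℝ (Fin d) := gradient (fs i) x - gradient (fs i) xstar
    with hg
  set u : EuclideanSpace ℝ (Fin d) := x - xstar with hu
  have hcoco := coco (fs i) μ (L i) hμ (hL i) (hsc i) (hsm i) x xstar
  rw [← hg, ← hu] at hcoco
  -- expand the norm
  have hexp : ‖u - γ • g‖ ^ 2 = ‖u‖ ^ 2 - 2 * γ * ⟪g, u⟫ + γ ^ 2 * ‖g‖ ^ 2 := by
    rw [norm_sub_sq_real, real_inner_smul_right, norm_smul, Real.norm_eq_abs,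
      abs_of_pos hγ, mul_pow, real_inner_comm]
    ring
  rw [hexp]
  -- step size bound
  have hLpos := hL i
  have hp2 : (0:ℝ) < p ^ 2 := by positivity
  have hp2' : 0 ≤ 1 - p ^ 2 := by nlinarith
  have hD : 0 < 1 - q i * (1 - p ^ 2) := by
    have := mul_le_mul_of_nonneg_right (hq1 i) hp2'
    nlinarith
  have hγle' := hγle i
  have hkey : γ * (1 - q i * (1 - p ^ 2)) * L i ≤ p ^ 2 := by
    have h2 := mul_le_mul_of_nonneg_right hγle' (mul_pos hD hLpos).le
    have e : 1 / L i * (p ^ 2 / (1 - q i * (1 - p ^ 2)))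
        * ((1 - q i * (1 - p ^ 2)) * L i) = p ^ 2 := by field_simp
    nlinarith [h2, e]
  have h3 : γ * (γ * (1 - q i * (1 - p ^ 2)) * L i) ≤ γ * p ^ 2 :=
    mul_le_mul_of_nonneg_left hkey hγ.le
  have hgb : γ ^ 2 * (1 - q i * (1 - p ^ 2)) / p ^ 2 ≤ γ / L i := by
    rw [div_le_div_iff₀ hp2 hLpos]; nlinarith [h3]
  have A := mul_le_mul_of_nonneg_left hcoco hγ.le
  have B := mul_le_mul_of_nonneg_right hgb (sq_nonneg ‖g‖)
  have hid : γ ^ 2 * (1 - q i * (1 - p ^ 2)) / p ^ 2 * ‖g‖ ^ 2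
      = γ ^ 2 * ‖g‖ ^ 2 + (1 - q i) * (1 - p ^ 2) * (γ ^ 2 / p ^ 2) * ‖g‖ ^ 2 := by
    field_simp; ring
  have hdiv : γ / L i * ‖g‖ ^ 2 = γ * (1 / L i * ‖g‖ ^ 2) := by ring
  linarith [A, B, hid, hdiv]
end
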